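/- Let φ be an injective ℂ-algebra endomorphism of ℂ[x,y] whose Jacobian determinant D(φ(x), φ(y)) has degree at least 1. Then for every k ≥ 1, the Jacobian determinant D(φ^k(x), φ^k(y)) of the k-th iterate of φ has degree at least k. -/

import Mathlib

open MvPolynomial

/-- `ℂ[x,y]` as multivariate polynomials in two variables. -/
local notation "P" => MvPolynomial (Fin 2) ℂ

/-- The Jacobian determinant `D(u,v) = ∂ₓu·∂ᵧv − ∂ᵧu·∂ₓv`. -/
noncomputable def jacDet (u v : P) : P :=
  pderiv (0 : Fin 2) u * pderiv (1 : Fin 2) v -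
    pderiv (1 : Fin 2) u * pderiv (0 : Fin 2) v

/-!
By the chain rule, `D(ψ u, ψ v) = ψ (D(u, v)) · D(ψ x, ψ y)` for every endomorphism `ψ`.
Applied to `ψ = φ^k` and `(u, v) = (φ x, φ y)` this gives
`D(φ^(k+1) x, φ^(k+1) y) = φ^k (D(φ x, φ y)) · D(φ^k x, φ^k y)`.
The injective map `φ^k` keeps the nonconstant polynomial `D(φ x, φ y)` nonconstant, and total
degree is additive on `ℂ[x,y]`, so the degree grows by at least one with each iterate.
-/

namespace MvPolynomial

variable {R σ τ : Type*} [CommSemiring R]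

theorem pderiv_algHom [Fintype σ] (ψ : MvPolynomial σ R →ₐ[R] MvPolynomial τ R)
    (p : MvPolynomial σ R) (i : τ) :
    pderiv i (ψ p) = ∑ j, ψ (pderiv j p) * pderiv i (ψ (X j)) := by
  classical
  induction p using MvPolynomial.induction_on with
  | C a => simp [algHom_C]
  | add p q hp hq => simp only [map_add, hp, hq, add_mul, Finset.sum_add_distrib]
  | mul_X p j hp =>
    simp only [map_mul, pderiv_mul, hp, pderiv_X, Pi.single_apply, map_add, mul_ite, mul_one,
      mul_zero, apply_ite ψ, map_zero, add_mul, ite_mul, zero_mul, Finset.sum_add_distrib,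
      Finset.sum_ite_eq, Finset.mem_univ, if_true, Finset.sum_mul]
    exact congrArg (· + _) (Finset.sum_congr rfl fun _ _ ↦ by ring)

theorem totalDegree_pos_of_injective {ψ : MvPolynomial σ R →ₐ[R] MvPolynomial τ R}
    (hψ : Function.Injective ψ) {p : MvPolynomial σ R} (hp : 0 < p.totalDegree) :
    0 < (ψ p).totalDegree := by
  by_contra h
  have hc := totalDegree_eq_zero_iff_eq_C.mp (Nat.eq_zero_of_not_pos h)
  have hpc : p = C ((ψ p).coeff 0) := hψ (by rw [algHom_C]; exact hc)
  rw [hpc, totalDegree_C] at hp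
  exact lt_irrefl 0 hp

end MvPolynomial

theorem jacDet_algHom (ψ : P →ₐ[ℂ] P) (u v : P) :
    jacDet (ψ u) (ψ v) = ψ (jacDet u v) * jacDet (ψ (X 0)) (ψ (X 1)) := by
  simp only [jacDet, pderiv_algHom ψ u, pderiv_algHom ψ v, Fin.sum_univ_two, map_sub, map_mul]
  ring

theorem jacDet_pow_succ (φ : P →ₐ[ℂ] P) (k : ℕ) :
    jacDet ((φ ^ (k + 1)) (X 0)) ((φ ^ (k + 1)) (X 1)) =
      (φ ^ k) (jacDet (φ (X 0)) (φ (X 1))) * jacDet ((φ ^ k) (X 0)) ((φ ^ k) (X 1)) := by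
  rw [pow_succ, AlgHom.mul_apply, AlgHom.mul_apply, jacDet_algHom]

theorem jacDet_degree_of_iterate (φ : P →ₐ[ℂ] P)
    (hinj : Function.Injective φ)
    (hdeg : 1 ≤ (jacDet (φ (X 0)) (φ (X 1))).totalDegree) :
    ∀ k : ℕ, 1 ≤ k →
      k ≤ (jacDet ((φ ^ k : P →ₐ[ℂ] P) (X 0)) ((φ ^ k : P →ₐ[ℂ] P) (X 1))).totalDegree := by
  intro k hk
  induction k, hk using Nat.le_induction with
  | base => simpa using hdeg
  | succ k _ ih =>
    have hpow : Function.Injective (φ ^ k) := AlgHom.coe_pow φ k ▸ hinj.iterate k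
    have hJ := totalDegree_pos_of_injective hpow hdeg
    rw [jacDet_pow_succ,
      totalDegree_mul_of_isDomain (fun h ↦ by rw [h, totalDegree_zero] at hJ; omega)
        (fun h ↦ by rw [h, totalDegree_zero] at ih; omega)]
    omega
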